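/- arXiv:1612.07230 — 2 statements merged into one kernel-verified Lean document; each statement's English description precedes it below -/
import Mathlib

section
/- Let 0 < a < 1 and let R_a : [0,1] → [0,1] be the unique bounded function satisfying R_a(0) = 0, R_a(1) = 1, R_a(x) = a·R_a(2x) for 0 ≤ x < 1/2, and R_a(x) = (1−a)·R_a(2x−1) + a for 1/2 ≤ x ≤ 1. Then R_a exists, is unique, and is continuous and strictly increasing on [0,1]. -/
open Real Filter Set

/-- The defining properties of De Rham's function with parameter `a`,
for a function `R : ℝ → ℝ` considered on `[0,1]` (values outside `[0,1]` are
normalized to `0`, and `R` is required to be bounded on `[0,1]`). -/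
def IsDeRhamBdd (a : ℝ) (R : ℝ → ℝ) : Prop :=
  (∀ x : ℝ, x ∉ Set.Icc (0:ℝ) 1 → R x = 0) ∧
  (∃ M : ℝ, ∀ x ∈ Set.Icc (0:ℝ) 1, |R x| ≤ M) ∧
  R 0 = 0 ∧ R 1 = 1 ∧
  (∀ x : ℝ, 0 ≤ x → x < 1/2 → R x = a * R (2*x)) ∧
  (∀ x : ℝ, 1/2 ≤ x → x ≤ 1 → R x = (1 - a) * R (2*x - 1) + a)

open Topology

noncomputable section DeRhamAux

/-- The de Rham contraction operator. -/
def derhamT (a : ℝ) (f : ℝ → ℝ) : ℝ → ℝ := fun x =>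
  if x < 0 then 0
  else if x < 1/2 then a * f (2*x)
  else if x ≤ 1 then (1-a) * f (2*x-1) + a else 0

lemma derhamT_left {a : ℝ} {f : ℝ → ℝ} {x : ℝ} (h0 : 0 ≤ x) (h : x < 1/2) :
    derhamT a f x = a * f (2*x) := by
  simp only [derhamT, if_neg (not_lt.2 h0), if_pos h]

lemma derhamT_right {a : ℝ} {f : ℝ → ℝ} {x : ℝ} (h : 1/2 ≤ x) (h1 : x ≤ 1) :
    derhamT a f x = (1-a) * f (2*x-1) + a := by
  simp only [derhamT, if_neg (not_lt.2 (by linarith : (0:ℝ) ≤ x)),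
    if_neg (not_lt.2 h), if_pos h1]

lemma derhamT_outside {a : ℝ} {f : ℝ → ℝ} {x : ℝ} (h : x ∉ Set.Icc (0:ℝ) 1) :
    derhamT a f x = 0 := by
  rw [Set.mem_Icc, not_and_or, not_le, not_le] at h
  rcases h with h | h
  · simp only [derhamT, if_pos h]
  · simp only [derhamT, if_neg (not_lt.2 (by linarith : (0:ℝ) ≤ x)),
      if_neg (not_lt.2 (by linarith : (1:ℝ)/2 ≤ x)), if_neg (not_le.2 h)]

/-- Invariant properties preserved by the operator. -/
structure DerhamGood (f : ℝ → ℝ) : Prop where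
  zero : f 0 = 0
  one : f 1 = 1
  mem : ∀ x ∈ Set.Icc (0:ℝ) 1, f x ∈ Set.Icc (0:ℝ) 1
  cont : ContinuousOn f (Set.Icc (0:ℝ) 1)
  mono : MonotoneOn f (Set.Icc (0:ℝ) 1)

lemma derhamGood_step {a : ℝ} (ha0 : 0 < a) (ha1 : a < 1) {f : ℝ → ℝ}
    (hf : DerhamGood f) : DerhamGood (derhamT a f) := by
  have hz : derhamT a f 0 = 0 := by
    rw [derhamT_left le_rfl (by norm_num)]; norm_num [hf.zero]
  have ho : derhamT a f 1 = 1 := by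
    rw [derhamT_right (by norm_num) le_rfl]; norm_num [hf.one]
  have hmem : ∀ x ∈ Set.Icc (0:ℝ) 1, derhamT a f x ∈ Set.Icc (0:ℝ) 1 := by
    rintro x ⟨hx0, hx1⟩
    rcases lt_or_ge x (1/2) with h | h
    · rw [derhamT_left hx0 h]
      have h2 := hf.mem (2*x) ⟨by linarith, by linarith⟩
      rw [Set.mem_Icc] at h2 ⊢
      constructor <;> nlinarith [h2.1, h2.2]
    · rw [derhamT_right h hx1]
      have h2 := hf.mem (2*x-1) ⟨by linarith, by linarith⟩
      rw [Set.mem_Icc] at h2 ⊢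
      constructor <;> nlinarith [h2.1, h2.2]
  refine ⟨hz, ho, hmem, ?_, ?_⟩
  · -- continuity
    have key : Set.EqOn (fun x => if x ≤ 1/2 then a * f (2*x) else (1-a) * f (2*x-1) + a)
        (derhamT a f) (Set.Icc (0:ℝ) 1) := by
      rintro x ⟨hx0, hx1⟩
      by_cases h : x ≤ 1/2
      · rcases lt_or_eq_of_le h with h' | h'
        · simp only [if_pos h, derhamT_left hx0 h']
        · subst h'
          show (if (1/2:ℝ) ≤ 1/2 then a * f (2*(1/2)) else (1-a) * f (2*(1/2)-1) + a)
            = derhamT a f (1/2)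
          rw [if_pos le_rfl, derhamT_right le_rfl (by norm_num)]
          norm_num [hf.zero, hf.one]
      · simp only [if_neg h, derhamT_right (le_of_not_ge h) hx1]
    refine ContinuousOn.congr ?_ key.symm
    apply ContinuousOn.if
    · rintro x ⟨hx, hfr⟩
      have : frontier {x : ℝ | x ≤ 1/2} = {(1/2 : ℝ)} := by
        rw [show {x : ℝ | x ≤ 1/2} = Set.Iic (1/2) from rfl, frontier_Iic]
      rw [this, Set.mem_singleton_iff] at hfr
      subst hfr
      norm_num [hf.zero, hf.one]
    · have hcl : closure {x : ℝ | x ≤ 1/2} = Set.Iic (1/2) := by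
        rw [show {x : ℝ | x ≤ 1/2} = Set.Iic (1/2) from rfl, closure_Iic]
      rw [hcl]
      refine continuousOn_const.mul (hf.cont.comp (by fun_prop) ?_)
      rintro x ⟨⟨hx0, _⟩, hx2⟩
      simp only [Set.mem_Iic] at hx2
      simp only [Set.mem_Icc]
      constructor <;> linarith
    · have hcl : closure {x : ℝ | ¬ x ≤ 1/2} = Set.Ici (1/2) := by
        have : {x : ℝ | ¬ x ≤ 1/2} = Set.Ioi (1/2) := by ext x; simp [Set.mem_Ioi]
        rw [this, closure_Ioi]
      rw [hcl]
      refine ((continuousOn_const.mul (hf.cont.comp (by fun_prop) ?_)).add continuousOn_const)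
      rintro x ⟨⟨_, hx1⟩, hx2⟩
      simp only [Set.mem_Ici] at hx2
      simp only [Set.mem_Icc]
      constructor <;> linarith
  · -- monotone
    rintro x ⟨hx0, hx1⟩ y ⟨hy0, hy1⟩ hxy
    rcases lt_or_ge x (1/2) with h1 | h1 <;> rcases lt_or_ge y (1/2) with h2 | h2
    · rw [derhamT_left hx0 h1, derhamT_left hy0 h2]
      exact mul_le_mul_of_nonneg_left
        (hf.mono ⟨by linarith, by linarith⟩ ⟨by linarith, by linarith⟩ (by linarith)) ha0.le
    · rw [derhamT_left hx0 h1, derhamT_right h2 hy1]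
      have hfx := hf.mem (2*x) ⟨by linarith, by linarith⟩
      have hfy := hf.mem (2*y-1) ⟨by linarith, by linarith⟩
      rw [Set.mem_Icc] at hfx hfy
      nlinarith [hfx.1, hfx.2, hfy.1, hfy.2]
    · linarith
    · rw [derhamT_right h1 hx1, derhamT_right h2 hy1]
      have := hf.mono (a := 2*x-1) (b := 2*y-1) ⟨by linarith, by linarith⟩
        ⟨by linarith, by linarith⟩ (by linarith)
      nlinarith

-- PART 2
def derhamSeq (a : ℝ) : ℕ → ℝ → ℝ
  | 0 => fun x => max 0 (min x 1)
  | n+1 => derhamT a (derhamSeq a n)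

def derhamR (a : ℝ) : ℝ → ℝ := fun x => limUnder atTop (fun n => derhamSeq a n x)

lemma derhamSeq_good {a : ℝ} (ha0 : 0 < a) (ha1 : a < 1) (n : ℕ) :
    DerhamGood (derhamSeq a n) := by
  induction n with
  | zero =>
    refine ⟨by simp [derhamSeq], by simp [derhamSeq], ?_, ?_, ?_⟩
    · rintro x ⟨hx0, hx1⟩
      simp only [derhamSeq, Set.mem_Icc]
      constructor
      · exact le_max_left _ _
      · exact max_le (by norm_num) (min_le_right _ _)
    · exact (continuous_const.max (continuous_id.min continuous_const)).continuousOn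
    · exact (Monotone.max monotone_const (monotone_id.min monotone_const)).monotoneOn _
  | succ n ih => exact derhamGood_step ha0 ha1 ih

lemma derhamSeq_outside {a : ℝ} {x : ℝ} (h : x ∉ Set.Icc (0:ℝ) 1) (n : ℕ) :
    derhamSeq a (n+1) x = 0 := derhamT_outside h

lemma derham_contract {a : ℝ} (ha0 : 0 < a) (ha1 : a < 1) {f g : ℝ → ℝ} {M : ℝ}
    (h : ∀ y ∈ Set.Icc (0:ℝ) 1, |f y - g y| ≤ M) :
    ∀ x ∈ Set.Icc (0:ℝ) 1, |derhamT a f x - derhamT a g x| ≤ max a (1-a) * M := by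
  have hM : 0 ≤ M := le_trans (abs_nonneg _) (h 0 ⟨le_refl _, by norm_num⟩)
  rintro x ⟨hx0, hx1⟩
  rcases lt_or_ge x (1/2) with hx | hx
  · rw [derhamT_left hx0 hx, derhamT_left hx0 hx, ← mul_sub, abs_mul, abs_of_pos ha0]
    exact mul_le_mul (le_max_left _ _) (h (2*x) ⟨by linarith, by linarith⟩) (abs_nonneg _)
      (le_trans ha0.le (le_max_left _ _))
  · rw [derhamT_right hx hx1, derhamT_right hx hx1]
    have : (1-a) * f (2*x-1) + a - ((1-a) * g (2*x-1) + a) = (1-a) * (f (2*x-1) - g (2*x-1)) := by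
      ring
    rw [this, abs_mul, abs_of_pos (by linarith : (0:ℝ) < 1 - a)]
    exact mul_le_mul (le_max_right _ _) (h (2*x-1) ⟨by linarith, by linarith⟩) (abs_nonneg _)
      (le_trans (by linarith) (le_max_right _ _))

lemma derham_step_bound {a : ℝ} (ha0 : 0 < a) (ha1 : a < 1) (n : ℕ) :
    ∀ x ∈ Set.Icc (0:ℝ) 1, |derhamSeq a (n+1) x - derhamSeq a n x| ≤ (max a (1-a))^n := by
  induction n with
  | zero =>
    intro x hx
    have h1 := (derhamSeq_good ha0 ha1 1).mem x hx
    have h0 := (derhamSeq_good ha0 ha1 0).mem x hx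
    rw [Set.mem_Icc] at h1 h0
    rw [pow_zero, abs_sub_le_iff]
    constructor <;> linarith [h1.1, h1.2, h0.1, h0.2]
  | succ n ih =>
    intro x hx
    have := derham_contract ha0 ha1 ih x hx
    calc |derhamSeq a (n+2) x - derhamSeq a (n+1) x|
        ≤ max a (1-a) * (max a (1-a))^n := this
      _ = (max a (1-a))^(n+1) := by rw [pow_succ]; ring

lemma derham_tail_bound {a : ℝ} (ha0 : 0 < a) (ha1 : a < 1) (n m : ℕ) :
    ∀ x ∈ Set.Icc (0:ℝ) 1,
      |derhamSeq a (n+m) x - derhamSeq a n x| ≤ (max a (1-a))^n / (1 - max a (1-a)) := by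
  set c := max a (1-a) with hc
  have hc0 : 0 < c := lt_of_lt_of_le ha0 (le_max_left _ _)
  have hc1 : c < 1 := max_lt ha1 (by linarith)
  have key : ∀ m : ℕ, ∀ x ∈ Set.Icc (0:ℝ) 1,
      |derhamSeq a (n+m) x - derhamSeq a n x| ≤ (c^n - c^(n+m)) / (1 - c) := by
    intro m
    induction m with
    | zero => intro x _; rw [Nat.add_zero, sub_self, abs_zero, sub_self, zero_div]
    | succ m ih =>
      intro x hx
      have h1 := derham_step_bound ha0 ha1 (n+m) x hx
      have h2 := ih x hx
      have e : c^(n+m) + (c^n - c^(n+m))/(1-c) = (c^n - c^(n+(m+1)))/(1-c) := by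
        have hne : (1:ℝ) - c ≠ 0 := by linarith
        rw [show n+(m+1) = (n+m)+1 from rfl, pow_succ]
        field_simp
        ring
      calc |derhamSeq a (n+(m+1)) x - derhamSeq a n x|
          ≤ |derhamSeq a ((n+m)+1) x - derhamSeq a (n+m) x|
            + |derhamSeq a (n+m) x - derhamSeq a n x| := by
              rw [show n+(m+1) = (n+m)+1 from rfl]; exact abs_sub_le _ _ _
        _ ≤ c^(n+m) + (c^n - c^(n+m))/(1-c) := add_le_add h1 h2
        _ = (c^n - c^(n+(m+1)))/(1-c) := e
  intro x hx
  refine le_trans (key m x hx) ?_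
  exact (div_le_div_iff_of_pos_right (by linarith)).2 (sub_le_self _ (by positivity))

-- PART 3: the limit function
lemma derham_cauchy {a : ℝ} (ha0 : 0 < a) (ha1 : a < 1) {x : ℝ} (hx : x ∈ Set.Icc (0:ℝ) 1) :
    CauchySeq (fun n => derhamSeq a n x) := by
  have hc0 : 0 < max a (1-a) := lt_of_lt_of_le ha0 (le_max_left _ _)
  have hc1 : max a (1-a) < 1 := max_lt ha1 (by linarith)
  refine cauchySeq_of_le_geometric (max a (1-a)) 1 hc1 (fun n => ?_)
  rw [Real.dist_eq, abs_sub_comm, one_mul]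
  exact derham_step_bound ha0 ha1 n x hx

lemma derham_tendsto {a : ℝ} (ha0 : 0 < a) (ha1 : a < 1) {x : ℝ} (hx : x ∈ Set.Icc (0:ℝ) 1) :
    Tendsto (fun n => derhamSeq a n x) atTop (𝓝 (derhamR a x)) :=
  (derham_cauchy ha0 ha1 hx).tendsto_limUnder

lemma derhamR_outside {a : ℝ} {x : ℝ} (hx : x ∉ Set.Icc (0:ℝ) 1) : derhamR a x = 0 := by
  apply Filter.Tendsto.limUnder_eq
  apply Tendsto.congr' (f₁ := fun _ => (0:ℝ))
  · filter_upwards [eventually_ge_atTop 1] with n hn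
    obtain ⟨m, rfl⟩ : ∃ m, n = m + 1 := ⟨n - 1, by omega⟩
    exact (derhamSeq_outside hx m).symm
  · exact tendsto_const_nhds

lemma derhamR_zero {a : ℝ} (ha0 : 0 < a) (ha1 : a < 1) : derhamR a 0 = 0 := by
  refine tendsto_nhds_unique (derham_tendsto ha0 ha1 (x := 0) (by norm_num)) ?_
  have : (fun n => derhamSeq a n 0) = fun _ => (0:ℝ) :=
    funext fun n => (derhamSeq_good ha0 ha1 n).zero
  rw [this]; exact tendsto_const_nhds

lemma derhamR_one {a : ℝ} (ha0 : 0 < a) (ha1 : a < 1) : derhamR a 1 = 1 := by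
  refine tendsto_nhds_unique (derham_tendsto ha0 ha1 (x := 1) (by norm_num)) ?_
  have : (fun n => derhamSeq a n 1) = fun _ => (1:ℝ) :=
    funext fun n => (derhamSeq_good ha0 ha1 n).one
  rw [this]; exact tendsto_const_nhds

lemma derhamR_mem {a : ℝ} (ha0 : 0 < a) (ha1 : a < 1) {x : ℝ} (hx : x ∈ Set.Icc (0:ℝ) 1) :
    derhamR a x ∈ Set.Icc (0:ℝ) 1 := by
  constructor
  · exact ge_of_tendsto' (derham_tendsto ha0 ha1 hx)
      (fun n => ((derhamSeq_good ha0 ha1 n).mem x hx).1)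
  · exact le_of_tendsto' (derham_tendsto ha0 ha1 hx)
      (fun n => ((derhamSeq_good ha0 ha1 n).mem x hx).2)

lemma derhamR_eq1 {a : ℝ} (ha0 : 0 < a) (ha1 : a < 1) (x : ℝ) (hx0 : 0 ≤ x) (hx : x < 1/2) :
    derhamR a x = a * derhamR a (2*x) := by
  have hxm : x ∈ Set.Icc (0:ℝ) 1 := ⟨hx0, by linarith⟩
  have h2m : 2*x ∈ Set.Icc (0:ℝ) 1 := ⟨by linarith, by linarith⟩
  have h1 : Tendsto (fun n => derhamSeq a (n+1) x) atTop (𝓝 (derhamR a x)) :=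
    (derham_tendsto ha0 ha1 hxm).comp (tendsto_add_atTop_nat 1)
  have h2 : Tendsto (fun n => a * derhamSeq a n (2*x)) atTop (𝓝 (a * derhamR a (2*x))) :=
    (derham_tendsto ha0 ha1 h2m).const_mul a
  refine tendsto_nhds_unique ?_ h2
  refine h1.congr (fun n => ?_)
  exact derhamT_left hx0 hx

lemma derhamR_eq2 {a : ℝ} (ha0 : 0 < a) (ha1 : a < 1) (x : ℝ) (hx0 : 1/2 ≤ x) (hx : x ≤ 1) :
    derhamR a x = (1-a) * derhamR a (2*x-1) + a := by
  have hxm : x ∈ Set.Icc (0:ℝ) 1 := ⟨by linarith, hx⟩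
  have h2m : 2*x-1 ∈ Set.Icc (0:ℝ) 1 := ⟨by linarith, by linarith⟩
  have h1 : Tendsto (fun n => derhamSeq a (n+1) x) atTop (𝓝 (derhamR a x)) :=
    (derham_tendsto ha0 ha1 hxm).comp (tendsto_add_atTop_nat 1)
  have h2 : Tendsto (fun n => (1-a) * derhamSeq a n (2*x-1) + a) atTop
      (𝓝 ((1-a) * derhamR a (2*x-1) + a)) :=
    (((derham_tendsto ha0 ha1 h2m).const_mul (1-a)).add_const a)
  refine tendsto_nhds_unique ?_ h2
  refine h1.congr (fun n => ?_)
  exact derhamT_right hx0 hx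

lemma derhamR_mono {a : ℝ} (ha0 : 0 < a) (ha1 : a < 1) :
    MonotoneOn (derhamR a) (Set.Icc (0:ℝ) 1) := by
  intro x hx y hy hxy
  exact le_of_tendsto_of_tendsto' (derham_tendsto ha0 ha1 hx) (derham_tendsto ha0 ha1 hy)
    (fun n => (derhamSeq_good ha0 ha1 n).mono hx hy hxy)

lemma derhamR_unif_bound {a : ℝ} (ha0 : 0 < a) (ha1 : a < 1) (n : ℕ) {x : ℝ}
    (hx : x ∈ Set.Icc (0:ℝ) 1) :
    |derhamR a x - derhamSeq a n x| ≤ (max a (1-a))^n / (1 - max a (1-a)) := by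
  have h1 : Tendsto (fun m => |derhamSeq a (n+m) x - derhamSeq a n x|) atTop
      (𝓝 (|derhamR a x - derhamSeq a n x|)) := by
    have ht : Tendsto (fun m => derhamSeq a (n+m) x) atTop (𝓝 (derhamR a x)) := by
      have := (derham_tendsto ha0 ha1 hx).comp (tendsto_add_atTop_nat n)
      refine this.congr (fun m => ?_)
      simp [Nat.add_comm]
    exact (ht.sub tendsto_const_nhds).abs
  exact le_of_tendsto h1 (Filter.Eventually.of_forall (fun m => derham_tail_bound ha0 ha1 n m x hx))

lemma derhamR_cont {a : ℝ} (ha0 : 0 < a) (ha1 : a < 1) :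
    ContinuousOn (derhamR a) (Set.Icc (0:ℝ) 1) := by
  set c := max a (1-a) with hc
  have hc0 : 0 < c := lt_of_lt_of_le ha0 (le_max_left _ _)
  have hc1 : c < 1 := max_lt ha1 (by linarith)
  have hU : TendstoUniformlyOn (fun n x => derhamSeq a n x) (derhamR a) atTop
      (Set.Icc (0:ℝ) 1) := by
    rw [Metric.tendstoUniformlyOn_iff]
    intro ε hε
    have htend : Tendsto (fun n => c^n / (1-c)) atTop (𝓝 0) := by
      have := (tendsto_pow_atTop_nhds_zero_of_lt_one hc0.le hc1).div_const (1-c)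
      simpa using this
    filter_upwards [htend.eventually (gt_mem_nhds hε)] with n hn x hx
    rw [Real.dist_eq]
    exact lt_of_le_of_lt (derhamR_unif_bound ha0 ha1 n hx) hn
  exact hU.continuousOn (Filter.Eventually.of_forall fun n => (derhamSeq_good ha0 ha1 n).cont).frequently

lemma derhamR_isDeRham_parts {a : ℝ} (ha0 : 0 < a) (ha1 : a < 1) :
    (∀ x : ℝ, x ∉ Set.Icc (0:ℝ) 1 → derhamR a x = 0) ∧
    (∃ M : ℝ, ∀ x ∈ Set.Icc (0:ℝ) 1, |derhamR a x| ≤ M) := by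
  refine ⟨fun x hx => derhamR_outside hx, ⟨1, fun x hx => ?_⟩⟩
  have := derhamR_mem ha0 ha1 hx
  rw [Set.mem_Icc] at this
  rw [abs_le]; constructor <;> linarith [this.1, this.2]

-- PART 4: uniqueness
lemma derham_unique {a : ℝ} (ha0 : 0 < a) (ha1 : a < 1) {R S : ℝ → ℝ}
    (hR : IsDeRhamBdd a R) (hS : IsDeRhamBdd a S) : R = S := by
  obtain ⟨hRout, ⟨MR, hMR⟩, _, _, hReq1, hReq2⟩ := hR
  obtain ⟨hSout, ⟨MS, hMS⟩, _, _, hSeq1, hSeq2⟩ := hS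
  set c := max a (1-a) with hc
  have hc0 : 0 < c := lt_of_lt_of_le ha0 (le_max_left _ _)
  have hc1 : c < 1 := max_lt ha1 (by linarith)
  have hM0 : 0 ≤ MR + MS := by
    have h1 := le_trans (abs_nonneg _) (hMR 0 (by norm_num))
    have h2 := le_trans (abs_nonneg _) (hMS 0 (by norm_num))
    linarith
  have key : ∀ n : ℕ, ∀ x ∈ Set.Icc (0:ℝ) 1, |R x - S x| ≤ c^n * (MR + MS) := by
    intro n
    induction n with
    | zero =>
      intro x hx
      have h1 := abs_le.1 (hMR x hx)
      have h2 := abs_le.1 (hMS x hx)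
      rw [pow_zero, one_mul, abs_le]
      constructor <;> linarith [h1.1, h1.2, h2.1, h2.2]
    | succ n ih =>
      rintro x ⟨hx0, hx1⟩
      rcases lt_or_ge x (1/2) with hx | hx
      · have ih' := ih (2*x) ⟨by linarith, by linarith⟩
        rw [hReq1 x hx0 hx, hSeq1 x hx0 hx, ← mul_sub, abs_mul, abs_of_pos ha0]
        calc a * |R (2*x) - S (2*x)| ≤ a * (c^n * (MR+MS)) :=
              mul_le_mul_of_nonneg_left ih' ha0.le
          _ ≤ c * (c^n * (MR+MS)) :=
              mul_le_mul_of_nonneg_right (le_max_left _ _) (by positivity)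
          _ = c^(n+1) * (MR+MS) := by rw [pow_succ]; ring
      · have ih' := ih (2*x-1) ⟨by linarith, by linarith⟩
        have e : R x - S x = (1-a) * (R (2*x-1) - S (2*x-1)) := by
          rw [hReq2 x hx hx1, hSeq2 x hx hx1]; ring
        rw [e, abs_mul, abs_of_pos (by linarith : (0:ℝ) < 1-a)]
        calc (1-a) * |R (2*x-1) - S (2*x-1)| ≤ (1-a) * (c^n * (MR+MS)) :=
              mul_le_mul_of_nonneg_left ih' (by linarith)
          _ ≤ c * (c^n * (MR+MS)) :=
              mul_le_mul_of_nonneg_right (le_max_right _ _) (by positivity)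
          _ = c^(n+1) * (MR+MS) := by rw [pow_succ]; ring
  funext x
  by_cases hx : x ∈ Set.Icc (0:ℝ) 1
  · have htend : Tendsto (fun n : ℕ => c^n * (MR+MS)) atTop (𝓝 0) := by
      have := (tendsto_pow_atTop_nhds_zero_of_lt_one hc0.le hc1).mul_const (MR+MS)
      simpa using this
    have hle : |R x - S x| ≤ 0 := ge_of_tendsto' htend (fun n => key n x hx)
    have := le_antisymm hle (abs_nonneg _)
    rwa [abs_eq_zero, sub_eq_zero] at this
  · rw [hRout x hx, hSout x hx]

-- PART 5: dyadic increments and strict monotonicity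
lemma derham_eq1' {a : ℝ} {R : ℝ → ℝ} (hR : IsDeRhamBdd a R) (x : ℝ)
    (hx0 : 0 ≤ x) (hx : x ≤ 1/2) : R x = a * R (2*x) := by
  obtain ⟨_, _, hz, ho, heq1, heq2⟩ := hR
  rcases lt_or_eq_of_le hx with h | h
  · exact heq1 x hx0 h
  · subst h
    rw [heq2 (1/2) le_rfl (by norm_num)]
    norm_num [hz, ho]

lemma derham_dyadic {a : ℝ} (ha0 : 0 < a) (ha1 : a < 1) {R : ℝ → ℝ}
    (hR : IsDeRhamBdd a R) :
    ∀ n k : ℕ, k < 2^n → R ((k : ℝ)/2^n) < R (((k : ℝ)+1)/2^n) := by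
  have heq2 := hR.2.2.2.2.2
  intro n
  induction n with
  | zero =>
    intro k hk
    interval_cases k
    simp only [pow_zero, Nat.cast_zero, zero_div, zero_add, div_one]
    rw [hR.2.2.1, hR.2.2.2.1]
    norm_num
  | succ n ih =>
    intro k hk
    have h2n : (0:ℝ) < 2^n := by positivity
    have h2n1 : (0:ℝ) < 2^(n+1) := by positivity
    by_cases hk2 : k + 1 ≤ 2^n
    · have hkR : (k:ℝ) + 1 ≤ 2^n := by exact_mod_cast hk2
      have hb1 : (k:ℝ)/2^(n+1) ≤ 1/2 := by
        rw [div_le_iff₀ h2n1]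
        rw [pow_succ]
        nlinarith
      have hb2 : ((k:ℝ)+1)/2^(n+1) ≤ 1/2 := by
        rw [div_le_iff₀ h2n1]
        rw [pow_succ]
        nlinarith
      rw [derham_eq1' hR _ (by positivity) hb1, derham_eq1' hR _ (by positivity) hb2]
      have e1 : 2 * ((k:ℝ)/2^(n+1)) = (k:ℝ)/2^n := by
        rw [pow_succ]; field_simp
      have e2 : 2 * (((k:ℝ)+1)/2^(n+1)) = ((k:ℝ)+1)/2^n := by
        rw [pow_succ]; field_simp
      rw [e1, e2]
      exact mul_lt_mul_of_pos_left (ih k (by omega)) ha0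
    · have hlow : 2^n ≤ k := by omega
      obtain ⟨j, rfl⟩ : ∃ j, k = 2^n + j := ⟨k - 2^n, by omega⟩
      have hj : j < 2^n := by
        have h2 : 2^(n+1) = 2^n + 2^n := by rw [pow_succ]; ring
        omega
      have hjR : (j:ℝ) < 2^n := by exact_mod_cast hj
      have hjR1 : (j:ℝ) + 1 ≤ 2^n := by
        have h' : j + 1 ≤ 2^n := hj
        exact_mod_cast h'
      have hcast : ((2^n + j : ℕ) : ℝ) = 2^n + j := by push_cast; ring
      have hx1lo : (1:ℝ)/2 ≤ ((2^n + j : ℕ):ℝ)/2^(n+1) := by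
        rw [hcast, le_div_iff₀ h2n1, pow_succ]
        nlinarith
      have hx1hi : ((2^n + j : ℕ):ℝ)/2^(n+1) ≤ 1 := by
        rw [hcast, div_le_one h2n1, pow_succ]
        nlinarith
      have hx2lo : (1:ℝ)/2 ≤ (((2^n + j : ℕ):ℝ)+1)/2^(n+1) := by
        rw [hcast, le_div_iff₀ h2n1, pow_succ]
        nlinarith
      have hx2hi : (((2^n + j : ℕ):ℝ)+1)/2^(n+1) ≤ 1 := by
        rw [hcast, div_le_one h2n1, pow_succ]
        nlinarith
      rw [heq2 _ hx1lo hx1hi, heq2 _ hx2lo hx2hi]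
      have e1 : 2 * (((2^n + j : ℕ):ℝ)/2^(n+1)) - 1 = (j:ℝ)/2^n := by
        rw [hcast, pow_succ]; field_simp; ring
      have e2 : 2 * ((((2^n + j : ℕ):ℝ)+1)/2^(n+1)) - 1 = ((j:ℝ)+1)/2^n := by
        rw [hcast, pow_succ]; field_simp; ring
      rw [e1, e2]
      exact add_lt_add_left (mul_lt_mul_of_pos_left (ih j hj) (by linarith : (0:ℝ) < 1 - a)) a

lemma derham_strictMono {a : ℝ} (ha0 : 0 < a) (ha1 : a < 1) {R : ℝ → ℝ}
    (hR : IsDeRhamBdd a R) (hmono : MonotoneOn R (Set.Icc (0:ℝ) 1)) :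
    StrictMonoOn R (Set.Icc (0:ℝ) 1) := by
  rintro x ⟨hx0, hx1⟩ y ⟨hy0, hy1⟩ hxy
  obtain ⟨n, hn⟩ : ∃ n : ℕ, ((1:ℝ)/2)^n < (y - x)/2 :=
    exists_pow_lt_of_lt_one (by linarith) (by norm_num)
  have h2n : (0:ℝ) < 2^n := by positivity
  have hn' : 2/2^n < y - x := by
    rw [div_pow, one_pow] at hn
    rw [div_lt_iff₀ h2n]
    rw [div_lt_iff₀ h2n] at hn
    nlinarith
  set k := ⌈2^n * x⌉₊ with hk
  have hkx : 2^n * x ≤ (k:ℝ) := Nat.le_ceil _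
  have hkx' : (k:ℝ) < 2^n * x + 1 := Nat.ceil_lt_add_one (by positivity)
  have hxk : x ≤ (k:ℝ)/2^n := by rw [le_div_iff₀ h2n]; linarith [hkx]
  have h2lt : 2 < (y - x) * 2^n := by
    rw [div_lt_iff₀ h2n] at hn'
    linarith
  have hky : ((k:ℝ)+1)/2^n < y := by
    rw [div_lt_iff₀ h2n]
    nlinarith [h2lt, hkx']
  have hklt : k < 2^n := by
    have h1 : ((k:ℝ)+1)/2^n < 1 := lt_of_lt_of_le hky hy1
    rw [div_lt_one h2n] at h1
    have : (k:ℝ) + 1 ≤ 2^n := by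
      have h2 : ((k+1 : ℕ):ℝ) < ((2^n : ℕ):ℝ) := by push_cast; linarith
      exact_mod_cast (Nat.cast_lt.1 h2).le
    by_contra hcon
    push_neg at hcon
    have : (2^n : ℝ) ≤ (k:ℝ) := by exact_mod_cast hcon
    linarith
  have hkm : (k:ℝ)/2^n ∈ Set.Icc (0:ℝ) 1 := by
    constructor
    · positivity
    · rw [div_le_one h2n]
      have : (k:ℝ) ≤ 2^n := by exact_mod_cast hklt.le
      linarith
  have hk1m : ((k:ℝ)+1)/2^n ∈ Set.Icc (0:ℝ) 1 := ⟨by positivity, le_of_lt (lt_of_lt_of_le hky hy1)⟩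
  calc R x ≤ R ((k:ℝ)/2^n) := hmono ⟨hx0, hx1⟩ hkm hxk
    _ < R (((k:ℝ)+1)/2^n) := derham_dyadic ha0 ha1 hR n k hklt
    _ ≤ R y := hmono hk1m ⟨hy0, hy1⟩ hky.le

end DeRhamAux

/-- For `0 < a < 1` there is a unique bounded function on `[0,1]`
satisfying De Rham's functional equations with `R 0 = 0`, `R 1 = 1`; moreover
any such function is continuous and strictly increasing on `[0,1]`. -/
theorem stmt6 (a : ℝ) (ha0 : 0 < a) (ha1 : a < 1) :
    (∃! R : ℝ → ℝ, IsDeRhamBdd a R) ∧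
    (∀ R : ℝ → ℝ, IsDeRhamBdd a R →
      ContinuousOn R (Set.Icc (0:ℝ) 1) ∧ StrictMonoOn R (Set.Icc (0:ℝ) 1)) := by
  have hIs : IsDeRhamBdd a (derhamR a) :=
    ⟨fun x hx => derhamR_outside hx, (derhamR_isDeRham_parts ha0 ha1).2,
      derhamR_zero ha0 ha1, derhamR_one ha0 ha1, derhamR_eq1 ha0 ha1, derhamR_eq2 ha0 ha1⟩
  constructor
  · exact ⟨derhamR a, hIs, fun S hS => derham_unique ha0 ha1 hS hIs⟩
  · intro R hR
    have hRe : R = derhamR a := derham_unique ha0 ha1 hR hIs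
    rw [hRe]
    exact ⟨derhamR_cont ha0 ha1,
      derham_strictMono ha0 ha1 hIs (derhamR_mono ha0 ha1)⟩
end

section
/- Let 0 < β < 1, 0 < α < 1, and f ∈ C¹([a,b]). Then for x ∈ (a,b) and ε > 0 small, the forward scale velocity of order α of the function g(x) := I^β_a f(x) − f(a)·(x−a)^β/Γ(β+1) satisfies S⁺_ε[g](x;α) = (ε^α/(1−α))·D^{1−β}_a f(x+ε), where D^{1−β}_a is the Caputo fractional derivative of order 1−β. -/
open Real Filter Set intervalIntegral

section Aux

open MeasureTheory Metric

variable {β : ℝ}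

private lemma kernel_cont (hβ : 0 < β) (y : ℝ) : Continuous fun t : ℝ => (y - t) ^ β := by
  rw [continuous_iff_continuousAt]
  intro t
  exact (Real.continuousAt_rpow_const _ _ (Or.inr hβ.le)).comp
    ((continuous_const.sub continuous_id).continuousAt)

private lemma kernel_intble (hβ : 0 < β) (y p q : ℝ) :
    IntervalIntegrable (fun t => (y - t) ^ (β - 1)) volume p q := by
  have h := (intervalIntegrable_rpow' (a := y - p) (b := y - q)
    (by linarith : (-1:ℝ) < β - 1)).comp_sub_left y
  simpa using h

private lemma integral_kernel {r : ℝ} (hr : -1 < r) (c u v : ℝ) :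
    ∫ t in u..v, (c - t) ^ r = ((c - u) ^ (r + 1) - (c - v) ^ (r + 1)) / (r + 1) := by
  rw [intervalIntegral.integral_comp_sub_left (fun x => x ^ r) c,
    integral_rpow (Or.inl hr)]

private lemma abs_integral_mul_le {φ k : ℝ → ℝ} {M u v : ℝ} (huv : u ≤ v)
    (hφ : ∀ t ∈ Set.Icc u v, |φ t| ≤ M)
    (hk : ∀ t ∈ Set.Icc u v, 0 ≤ k t)
    (hki : IntervalIntegrable k volume u v)
    (hfi : IntervalIntegrable (fun t => φ t * k t) volume u v) :
    |∫ t in u..v, φ t * k t| ≤ M * ∫ t in u..v, k t := by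
  refine (intervalIntegral.abs_integral_le_integral_abs huv).trans ?_
  rw [← intervalIntegral.integral_const_mul]
  refine intervalIntegral.integral_mono_on huv hfi.abs (hki.const_mul M) ?_
  intro t ht
  rw [abs_mul, abs_of_nonneg (hk t ht)]
  exact mul_le_mul_of_nonneg_right (hφ t ht) (hk t ht)

private lemma rpow_sub_rpow_le (hβ0 : 0 < β) {A B : ℝ} (hA : 0 ≤ A) (hAB : A ≤ B) :
    B ^ (β + 1) - A ^ (β + 1) ≤ (β + 1) * (B - A) * B ^ β := by
  rcases eq_or_lt_of_le hAB with rfl | h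
  · simp
  have hcont : ContinuousOn (fun x : ℝ => x ^ (β + 1)) (Set.Icc A B) := by
    apply Continuous.continuousOn
    rw [continuous_iff_continuousAt]
    exact fun x => Real.continuousAt_rpow_const _ _ (Or.inr (by linarith))
  have hder : ∀ x ∈ Set.Ioo A B, HasDerivAt (fun x : ℝ => x ^ (β + 1)) ((β + 1) * x ^ β) x := by
    intro x _
    have := Real.hasDerivAt_rpow_const (x := x) (p := β + 1) (Or.inr (by linarith))
    simpa using this
  obtain ⟨ξ, hξ, hξeq⟩ := exists_hasDerivAt_eq_slope _ _ h hcont hder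
  have h1 : (β + 1) * ξ ^ β ≤ (β + 1) * B ^ β :=
    mul_le_mul_of_nonneg_left
      (Real.rpow_le_rpow (hA.trans hξ.1.le) hξ.2.le hβ0.le) (by linarith)
  have h2 : B ^ (β + 1) - A ^ (β + 1) = (B - A) * ((β + 1) * ξ ^ β) := by
    rw [hξeq, mul_div_cancel₀ _ (sub_ne_zero.2 h.ne')]
  rw [h2]
  calc (B - A) * ((β + 1) * ξ ^ β) ≤ (B - A) * ((β + 1) * B ^ β) :=
        mul_le_mul_of_nonneg_left h1 (by linarith)
    _ = (β + 1) * (B - A) * B ^ β := by ring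

private lemma B_diff_bound (hβ0 : 0 < β) {a b p u v M : ℝ} {f' : ℝ → ℝ}
    (hcont : ContinuousOn f' (Set.Icc a b)) (hM : ∀ t ∈ Set.Icc a b, |f' t| ≤ M)
    (hap : a ≤ p) (hpu : p ≤ u) (huv : u ≤ v) (hvb : v ≤ b) :
    |(∫ t in p..v, f' t * (v - t) ^ β) - ∫ t in p..u, f' t * (u - t) ^ β|
      ≤ M * (v - u) * ((v - p) ^ β + (v - u) ^ β) := by
  have hM0 : 0 ≤ M := (abs_nonneg _).trans (hM u ⟨hap.trans hpu, huv.trans hvb⟩)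
  rcases eq_or_lt_of_le huv with rfl | huv'
  · simp
  have hsub1 : Set.uIcc p u ⊆ Set.Icc a b :=
    Set.uIcc_subset_Icc ⟨hap, hpu.trans (huv.trans hvb)⟩ ⟨hap.trans hpu, huv.trans hvb⟩
  have hsub2 : Set.uIcc u v ⊆ Set.Icc a b :=
    Set.uIcc_subset_Icc ⟨hap.trans hpu, huv.trans hvb⟩ ⟨hap.trans (hpu.trans huv), hvb⟩
  have int1 : IntervalIntegrable (fun t => f' t * (v - t) ^ β) volume p u :=
    ((hcont.mono hsub1).mul (kernel_cont hβ0 v).continuousOn).intervalIntegrable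
  have int2 : IntervalIntegrable (fun t => f' t * (v - t) ^ β) volume u v :=
    ((hcont.mono hsub2).mul (kernel_cont hβ0 v).continuousOn).intervalIntegrable
  have int3 : IntervalIntegrable (fun t => f' t * (u - t) ^ β) volume p u :=
    ((hcont.mono hsub1).mul (kernel_cont hβ0 u).continuousOn).intervalIntegrable
  have split : (∫ t in p..v, f' t * (v - t) ^ β)
      = (∫ t in p..u, f' t * (v - t) ^ β) + ∫ t in u..v, f' t * (v - t) ^ β :=
    (integral_add_adjacent_intervals int1 int2).symm
  rw [split]
  have habs : |((∫ t in p..u, f' t * (v - t) ^ β) + ∫ t in u..v, f' t * (v - t) ^ β)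
        - ∫ t in p..u, f' t * (u - t) ^ β|
      ≤ |(∫ t in p..u, f' t * (v - t) ^ β) - ∫ t in p..u, f' t * (u - t) ^ β|
        + |∫ t in u..v, f' t * (v - t) ^ β| := by
    have e : ∀ X Y Z : ℝ, (X + Y) - Z = (X - Z) + Y := fun X Y Z => by ring
    rw [e]
    exact abs_add_le _ _
  refine habs.trans ?_
  -- first term
  have key1 : |(∫ t in p..u, f' t * (v - t) ^ β) - ∫ t in p..u, f' t * (u - t) ^ β|
      ≤ M * (v - u) * (v - p) ^ β := by
    have e1 : (∫ t in p..u, f' t * (v - t) ^ β) - ∫ t in p..u, f' t * (u - t) ^ β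
        = ∫ t in p..u, f' t * ((v - t) ^ β - (u - t) ^ β) := by
      rw [← intervalIntegral.integral_sub int1 int3]
      refine intervalIntegral.integral_congr fun t _ => by ring
    rw [e1]
    have hknn : ∀ t ∈ Set.Icc p u, 0 ≤ (v - t) ^ β - (u - t) ^ β := by
      intro t ht
      have h1 : (0:ℝ) ≤ u - t := by linarith [ht.2]
      exact sub_nonneg.2 (Real.rpow_le_rpow h1 (by linarith) hβ0.le)
    have hki : IntervalIntegrable (fun t => (v - t) ^ β - (u - t) ^ β) volume p u :=
      ((kernel_cont hβ0 v).sub (kernel_cont hβ0 u)).intervalIntegrable _ _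
    have hfi : IntervalIntegrable (fun t => f' t * ((v - t) ^ β - (u - t) ^ β)) volume p u :=
      ((hcont.mono hsub1).mul
        ((kernel_cont hβ0 v).sub (kernel_cont hβ0 u)).continuousOn).intervalIntegrable
    have hb := abs_integral_mul_le hpu (fun t ht => hM t (hsub1 (by
      rw [Set.uIcc_of_le hpu]; exact ht))) hknn hki hfi
    refine hb.trans ?_
    have e2 : ∫ t in p..u, ((v - t) ^ β - (u - t) ^ β)
        = ((v - p) ^ (β+1) - (v - u) ^ (β+1)) / (β+1) - ((u - p) ^ (β+1) - 0) / (β+1) := by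
      rw [intervalIntegral.integral_sub
        ((kernel_cont hβ0 v).intervalIntegrable _ _) ((kernel_cont hβ0 u).intervalIntegrable _ _),
        integral_kernel (by linarith : (-1:ℝ) < β) v p u,
        integral_kernel (by linarith : (-1:ℝ) < β) u p u]
      rw [sub_self, Real.zero_rpow (by linarith : β + 1 ≠ 0)]
    rw [e2]
    have h3 : (v - p) ^ (β+1) - (u - p) ^ (β+1) ≤ (β+1) * (v - u) * (v - p) ^ β := by
      have := rpow_sub_rpow_le hβ0 (by linarith : (0:ℝ) ≤ u - p) (by linarith : u - p ≤ v - p)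
      calc (v - p) ^ (β+1) - (u - p) ^ (β+1) ≤ (β+1) * ((v - p) - (u - p)) * (v - p) ^ β := this
        _ = (β+1) * (v - u) * (v - p) ^ β := by ring
    have h4 : (0:ℝ) ≤ (v - u) ^ (β+1) := Real.rpow_nonneg (by linarith) _
    have h5 : ((v - p) ^ (β+1) - (v - u) ^ (β+1)) / (β+1) - ((u - p) ^ (β+1) - 0) / (β+1)
        ≤ (v - u) * (v - p) ^ β := by
      rw [div_sub_div_same, div_le_iff₀ (by linarith : (0:ℝ) < β + 1)]
      nlinarith [h3]
    calc M * (((v - p) ^ (β+1) - (v - u) ^ (β+1)) / (β+1) - ((u - p) ^ (β+1) - 0) / (β+1))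
        ≤ M * ((v - u) * (v - p) ^ β) := mul_le_mul_of_nonneg_left h5 hM0
      _ = M * (v - u) * (v - p) ^ β := by ring
  -- second term
  have key2 : |∫ t in u..v, f' t * (v - t) ^ β| ≤ M * (v - u) * (v - u) ^ β := by
    have hknn : ∀ t ∈ Set.Icc u v, 0 ≤ (v - t) ^ β :=
      fun t ht => Real.rpow_nonneg (by linarith [ht.2]) _
    have hb := abs_integral_mul_le huv (fun t ht => hM t (hsub2 (by
      rw [Set.uIcc_of_le huv]; exact ht))) hknn
      ((kernel_cont hβ0 v).intervalIntegrable _ _) int2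
    refine hb.trans ?_
    have e2 : ∫ t in u..v, (v - t) ^ β = ((v - u) ^ (β+1) - 0) / (β+1) := by
      rw [integral_kernel (by linarith : (-1:ℝ) < β) v u v, sub_self,
        Real.zero_rpow (by linarith : β + 1 ≠ 0)]
    rw [e2]
    have e3 : (v - u) ^ (β + 1) = (v - u) ^ β * (v - u) := by
      rw [Real.rpow_add_one (by linarith : v - u ≠ 0)]
    have h5 : ((v - u) ^ (β+1) - 0) / (β+1) ≤ (v - u) * (v - u) ^ β := by
      rw [sub_zero, div_le_iff₀ (by linarith : (0:ℝ) < β + 1), e3]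
      have hnn : 0 ≤ (v - u) ^ β * (v - u) :=
        mul_nonneg (Real.rpow_nonneg (by linarith) _) (by linarith)
      nlinarith [hnn]
    calc M * (((v - u) ^ (β+1) - 0) / (β+1)) ≤ M * ((v - u) * (v - u) ^ β) :=
          mul_le_mul_of_nonneg_left h5 hM0
      _ = M * (v - u) * (v - u) ^ β := by ring
  calc _ ≤ M * (v - u) * (v - p) ^ β + M * (v - u) * (v - u) ^ β := add_le_add key1 key2
    _ = M * (v - u) * ((v - p) ^ β + (v - u) ^ β) := by ring

private lemma hasDerivAt_Phi (hβ0 : 0 < β) (hβ1 : β < 1) {a b M : ℝ} {f' : ℝ → ℝ}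
    (hcont : ContinuousOn f' (Set.Icc a b))
    (hM : ∀ t ∈ Set.Icc a b, |f' t| ≤ M)
    {y₀ : ℝ} (hy₀ : y₀ ∈ Set.Ioo a b) :
    HasDerivAt (fun y => ∫ t in a..y, f' t * (y - t) ^ β)
      (β * ∫ t in a..y₀, f' t * (y₀ - t) ^ (β - 1)) y₀ := by
  obtain ⟨hy0a, hy0b⟩ := hy₀
  have hM0 : 0 ≤ M := (abs_nonneg _).trans (hM y₀ ⟨hy0a.le, hy0b.le⟩)
  have hint : ∀ {u v : ℝ}, u ∈ Set.Icc a b → v ∈ Set.Icc a b → ∀ y : ℝ,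
      IntervalIntegrable (fun t => f' t * (y - t) ^ β) volume u v := fun hu hv y =>
    ((hcont.mono (Set.uIcc_subset_Icc hu hv)).mul
      (kernel_cont hβ0 y).continuousOn).intervalIntegrable
  have hintk : ∀ {u v : ℝ}, u ∈ Set.Icc a b → v ∈ Set.Icc a b → ∀ y : ℝ,
      IntervalIntegrable (fun t => f' t * (y - t) ^ (β - 1)) volume u v := fun hu hv y =>
    (kernel_intble hβ0 y _ _).continuousOn_mul (hcont.mono (Set.uIcc_subset_Icc hu hv))
  rw [hasDerivAt_iff_isLittleO, Asymptotics.isLittleO_iff]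
  intro c hc
  set K : ℝ := 4 * M + 4 with hKdef
  have hK0 : 0 < K := by positivity
  have hcK : 0 < c / 2 / K := by positivity
  set r : ℝ := min ((y₀ - a) / 2) ((c / 2 / K) ^ (β⁻¹)) with hrdef
  have hr0 : 0 < r := lt_min (by linarith) (Real.rpow_pos_of_pos hcK _)
  have hrβ : r ^ β ≤ c / 2 / K := by
    have h1 : r ^ β ≤ ((c / 2 / K) ^ (β⁻¹)) ^ β :=
      Real.rpow_le_rpow hr0.le (min_le_right _ _) hβ0.le
    rwa [← Real.rpow_mul hcK.le, inv_mul_cancel₀ hβ0.ne', Real.rpow_one] at h1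
  set p : ℝ := y₀ - r with hpdef
  have hra : r ≤ (y₀ - a) / 2 := min_le_left _ _
  have hap : a < p := by rw [hpdef]; linarith
  have hpy : p < y₀ := by rw [hpdef]; linarith
  have hamem : a ∈ Set.Icc a b := ⟨le_rfl, by linarith⟩
  have hpmem : p ∈ Set.Icc a b := ⟨hap.le, by linarith⟩
  have hymem : y₀ ∈ Set.Icc a b := ⟨hy0a.le, hy0b.le⟩
  have hIoc : Set.uIoc a p ⊆ Set.Icc a b := by
    rw [Set.uIoc_of_le hap.le]
    exact Set.Ioc_subset_Icc_self.trans (Set.Icc_subset_Icc le_rfl hpmem.2)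
  -- A-part : derivative of the integral over the fixed interval [a, p]
  have hmeas' : MeasureTheory.AEStronglyMeasurable
      (fun t => f' t * (β * (y₀ - t) ^ (β - 1))) (volume.restrict (Set.uIoc a p)) := by
    refine ((hcont.mono hIoc).mul ?_).aestronglyMeasurable measurableSet_uIoc
    intro t ht
    have htp : t ≤ p := ((Set.uIoc_of_le hap.le ▸ ht) : t ∈ Set.Ioc a p).2
    have hpos : (0:ℝ) < y₀ - t := by rw [hpdef] at htp; linarith
    exact (ContinuousAt.continuousWithinAt
      (((Real.continuousAt_rpow_const _ _ (Or.inl hpos.ne')).comp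
        ((continuous_const.sub continuous_id).continuousAt)).const_mul β))
  have hbound : ∀ᵐ t ∂(volume : MeasureTheory.Measure ℝ), t ∈ Set.uIoc a p →
      ∀ y ∈ Metric.ball y₀ (r / 2),
        ‖f' t * (β * (y - t) ^ (β - 1))‖ ≤ M * (β * (r / 2) ^ (β - 1)) := by
    refine Filter.Eventually.of_forall ?_
    intro t ht y hy
    have htp : t ≤ p := ((Set.uIoc_of_le hap.le ▸ ht) : t ∈ Set.Ioc a p).2
    have hyd : |y - y₀| < r / 2 := by rwa [Metric.mem_ball, Real.dist_eq] at hy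
    have hyt : r / 2 ≤ y - t := by
      have h := abs_lt.1 hyd; rw [hpdef] at htp; linarith [h.1]
    have hk0 : (0:ℝ) ≤ (y - t) ^ (β - 1) := Real.rpow_nonneg (by linarith) _
    rw [Real.norm_eq_abs, abs_mul, abs_of_nonneg (mul_nonneg hβ0.le hk0)]
    refine mul_le_mul (hM t (hIoc ht)) ?_ (mul_nonneg hβ0.le hk0) hM0
    exact mul_le_mul_of_nonneg_left
      (Real.rpow_le_rpow_of_nonpos (half_pos hr0) hyt (by linarith)) hβ0.le
  have hdiff : ∀ᵐ t ∂(volume : MeasureTheory.Measure ℝ), t ∈ Set.uIoc a p →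
      ∀ y ∈ Metric.ball y₀ (r / 2),
        HasDerivAt (fun y => f' t * (y - t) ^ β) (f' t * (β * (y - t) ^ (β - 1))) y := by
    refine Filter.Eventually.of_forall ?_
    intro t ht y hy
    have htp : t ≤ p := ((Set.uIoc_of_le hap.le ▸ ht) : t ∈ Set.Ioc a p).2
    have hyd : |y - y₀| < r / 2 := by rwa [Metric.mem_ball, Real.dist_eq] at hy
    have hpos : (0:ℝ) < y - t := by
      have h := abs_lt.1 hyd; rw [hpdef] at htp; linarith [h.1]
    have h1 : HasDerivAt (fun z : ℝ => (z - t) ^ β) (β * (y - t) ^ (β - 1) * 1) y := by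
      have := (Real.hasDerivAt_rpow_const (x := y - t) (p := β) (Or.inl hpos.ne')).comp y
        ((hasDerivAt_id y).sub_const t)
      exact this
    simpa [mul_one] using h1.const_mul (f' t)
  obtain ⟨-, hA⟩ := intervalIntegral.hasDerivAt_integral_of_dominated_loc_of_deriv_le
    (𝕜 := ℝ) (μ := volume)
    (F := fun y t => f' t * (y - t) ^ β) (F' := fun y t => f' t * (β * (y - t) ^ (β - 1)))
    (x₀ := y₀) (a := a) (b := p) (bound := fun _ => M * (β * (r / 2) ^ (β - 1)))
    (Metric.ball_mem_nhds y₀ (half_pos hr0))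
    (Filter.Eventually.of_forall fun y =>
      (((hcont.mono hIoc).mul (kernel_cont hβ0 y).continuousOn).aestronglyMeasurable
        measurableSet_uIoc))
    (hint hamem hpmem y₀) hmeas' hbound intervalIntegrable_const hdiff
  -- rewrite the derivative of the A-part
  have hDp : (∫ t in a..p, f' t * (β * (y₀ - t) ^ (β - 1)))
      = β * ∫ t in a..p, f' t * (y₀ - t) ^ (β - 1) := by
    rw [← intervalIntegral.integral_const_mul]
    exact intervalIntegral.integral_congr fun t _ => by ring
  rw [hDp] at hA
  have hA' := (hasDerivAt_iff_isLittleO.1 hA).def (half_pos hc)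
  -- the E-part bound
  have hEval : ∫ t in p..y₀, (y₀ - t) ^ (β - 1) = r ^ β / β := by
    rw [integral_kernel (by linarith : (-1:ℝ) < β - 1) y₀ p y₀]
    have e : β - 1 + 1 = β := by ring
    rw [e, sub_self, Real.zero_rpow hβ0.ne', hpdef, sub_sub_cancel, sub_zero]
  have hE : |∫ t in p..y₀, f' t * (y₀ - t) ^ (β - 1)| ≤ M * (r ^ β / β) := by
    have hb := abs_integral_mul_le hpy.le
      (fun t ht => hM t ⟨hap.le.trans ht.1, ht.2.trans hy0b.le⟩)
      (fun t ht => Real.rpow_nonneg (by linarith [ht.2]) _)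
      (kernel_intble hβ0 y₀ p y₀) (hintk hpmem hymem y₀)
    rwa [hEval] at hb
  -- auxiliary rpow bounds
  have h2r : ∀ {s : ℝ}, 0 ≤ s → s ≤ 2 * r → s ^ β ≤ 2 * r ^ β := by
    intro s hs hsle
    calc s ^ β ≤ (2 * r) ^ β := Real.rpow_le_rpow hs hsle hβ0.le
      _ = 2 ^ β * r ^ β := Real.mul_rpow (by norm_num) hr0.le
      _ ≤ 2 * r ^ β := by
          have h2 : (2:ℝ) ^ β ≤ 2 := by
            calc (2:ℝ) ^ β ≤ 2 ^ (1:ℝ) :=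
                  Real.rpow_le_rpow_of_exponent_le one_le_two hβ1.le
              _ = 2 := Real.rpow_one 2
          exact mul_le_mul_of_nonneg_right h2 (Real.rpow_nonneg hr0.le _)
  have h4 : 4 * M * (c / 2 / K) ≤ c / 2 := by
    have h41 : 4 * M / K ≤ 1 := (div_le_one hK0).2 (by linarith)
    calc 4 * M * (c / 2 / K) = (4 * M / K) * (c / 2) := by ring
      _ ≤ 1 * (c / 2) := mul_le_mul_of_nonneg_right h41 (by positivity)
      _ = c / 2 := one_mul _
  -- main filter argument
  have hδ : (0:ℝ) < min r (b - y₀) := lt_min hr0 (by linarith)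
  filter_upwards [hA', Metric.ball_mem_nhds y₀ hδ] with y hy1 hy2
  have hyy : |y - y₀| < min r (b - y₀) := by rwa [Metric.mem_ball, Real.dist_eq] at hy2
  have h1r : |y - y₀| ≤ r := (hyy.trans_le (min_le_left _ _)).le
  have h1b : |y - y₀| ≤ b - y₀ := (hyy.trans_le (min_le_right _ _)).le
  obtain ⟨hd1, hd2⟩ := abs_le.1 h1r
  have hyb : y ≤ b := by linarith [(abs_le.1 h1b).2]
  have hyp : p ≤ y := by rw [hpdef]; linarith
  have hya : a ≤ y := hap.le.trans hyp
  have hymem' : y ∈ Set.Icc a b := ⟨hya, hyb⟩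
  have e1 : (∫ t in a..y, f' t * (y - t) ^ β)
      = (∫ t in a..p, f' t * (y - t) ^ β) + ∫ t in p..y, f' t * (y - t) ^ β :=
    (integral_add_adjacent_intervals (hint hamem hpmem y) (hint hpmem hymem' y)).symm
  have e2 : (∫ t in a..y₀, f' t * (y₀ - t) ^ β)
      = (∫ t in a..p, f' t * (y₀ - t) ^ β) + ∫ t in p..y₀, f' t * (y₀ - t) ^ β :=
    (integral_add_adjacent_intervals (hint hamem hpmem y₀) (hint hpmem hymem y₀)).symm
  have e3 : (∫ t in a..y₀, f' t * (y₀ - t) ^ (β - 1))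
      = (∫ t in a..p, f' t * (y₀ - t) ^ (β - 1)) + ∫ t in p..y₀, f' t * (y₀ - t) ^ (β - 1) :=
    (integral_add_adjacent_intervals (hintk hamem hpmem y₀) (hintk hpmem hymem y₀)).symm
  simp only [Real.norm_eq_abs, smul_eq_mul] at hy1 ⊢
  rw [e1, e2, e3]
  set AY := ∫ t in a..p, f' t * (y - t) ^ β
  set AY₀ := ∫ t in a..p, f' t * (y₀ - t) ^ β
  set BY := ∫ t in p..y, f' t * (y - t) ^ β
  set BY₀ := ∫ t in p..y₀, f' t * (y₀ - t) ^ β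
  set Dp := ∫ t in a..p, f' t * (y₀ - t) ^ (β - 1)
  set Ep := ∫ t in p..y₀, f' t * (y₀ - t) ^ (β - 1)
  -- B-part bound
  have hB : |BY - BY₀| ≤ M * |y - y₀| * (2 * r ^ β + r ^ β) := by
    rcases le_total y₀ y with hle | hle
    · have hb := B_diff_bound hβ0 hcont hM hap.le hpy.le hle hyb
      have habs : |y - y₀| = y - y₀ := abs_of_nonneg (by linarith)
      refine hb.trans ?_
      rw [habs]
      refine mul_le_mul_of_nonneg_left (add_le_add ?_ ?_)
        (mul_nonneg hM0 (by linarith))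
      · exact h2r (by linarith) (by rw [hpdef]; linarith)
      · exact Real.rpow_le_rpow (by linarith) (by linarith) hβ0.le
    · have hb := B_diff_bound hβ0 hcont hM hap.le hyp hle hy0b.le
      have habs : |y - y₀| = y₀ - y := by rw [abs_sub_comm]; exact abs_of_nonneg (by linarith)
      rw [abs_sub_comm, habs]
      refine hb.trans ?_
      refine mul_le_mul_of_nonneg_left (add_le_add ?_ ?_)
        (mul_nonneg hM0 (by linarith))
      · exact h2r (by linarith) (by rw [hpdef]; linarith)
      · exact Real.rpow_le_rpow (by linarith) (by linarith) hβ0.le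
  -- assemble
  have key : (AY + BY) - (AY₀ + BY₀) - (y - y₀) * (β * (Dp + Ep))
      = (AY - AY₀ - (y - y₀) * (β * Dp)) + ((BY - BY₀) - (y - y₀) * (β * Ep)) := by ring
  rw [key]
  have t2 : |(BY - BY₀) - (y - y₀) * (β * Ep)| ≤ |BY - BY₀| + |y - y₀| * (β * |Ep|) := by
    refine (abs_sub _ _).trans ?_
    rw [abs_mul, abs_mul, abs_of_nonneg hβ0.le]
  have hEp2 : |y - y₀| * (β * |Ep|) ≤ |y - y₀| * (M * r ^ β) := by
    refine mul_le_mul_of_nonneg_left ?_ (abs_nonneg _)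
    have := mul_le_mul_of_nonneg_left hE hβ0.le
    calc β * |Ep| ≤ β * (M * (r ^ β / β)) := this
      _ = M * r ^ β := by field_simp
  have hstep : 4 * M * r ^ β * |y - y₀| ≤ c / 2 * |y - y₀| :=
    mul_le_mul_of_nonneg_right
      ((mul_le_mul_of_nonneg_left hrβ (by positivity : (0:ℝ) ≤ 4 * M)).trans h4)
      (abs_nonneg _)
  have hring : M * |y - y₀| * (2 * r ^ β + r ^ β) + |y - y₀| * (M * r ^ β)
      = 4 * M * r ^ β * |y - y₀| := by ring
  calc |(AY - AY₀ - (y - y₀) * (β * Dp)) + ((BY - BY₀) - (y - y₀) * (β * Ep))|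
      ≤ |AY - AY₀ - (y - y₀) * (β * Dp)| + |(BY - BY₀) - (y - y₀) * (β * Ep)| := abs_add_le _ _
    _ ≤ c / 2 * |y - y₀| + (|BY - BY₀| + |y - y₀| * (β * |Ep|)) := add_le_add hy1 t2
    _ ≤ c / 2 * |y - y₀| + (M * |y - y₀| * (2 * r ^ β + r ^ β) + |y - y₀| * (M * r ^ β)) :=
        add_le_add le_rfl (add_le_add hB hEp2)
    _ ≤ c * |y - y₀| := by rw [hring] at *; linarith [hstep]

private lemma ibp_identity (hβ0 : 0 < β) {a b : ℝ} {f f' : ℝ → ℝ}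
    (hderiv : ∀ t ∈ Set.Icc a b, HasDerivAt f (f' t) t)
    (hcont : ContinuousOn f' (Set.Icc a b))
    {y : ℝ} (hy : y ∈ Set.Ioc a b) :
    β * ∫ t in a..y, f t * (y - t) ^ (β - 1) =
      f a * (y - a) ^ β + ∫ t in a..y, f' t * (y - t) ^ β := by
  obtain ⟨hay, hyb⟩ := hy
  have hfc : ContinuousOn f (Set.Icc a b) :=
    fun t ht => (hderiv t ht).continuousAt.continuousWithinAt
  have hsub : Set.Icc a y ⊆ Set.Icc a b := Set.Icc_subset_Icc le_rfl hyb
  have hsub' : Set.uIcc a y ⊆ Set.Icc a b := by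
    rw [Set.uIcc_of_le hay.le]; exact hsub
  have int1 : IntervalIntegrable (fun t => f' t * (y - t) ^ β) volume a y :=
    ((hcont.mono hsub').mul (kernel_cont hβ0 y).continuousOn).intervalIntegrable
  have int2 : IntervalIntegrable (fun t => f t * (β * (y - t) ^ (β - 1))) volume a y :=
    ((kernel_intble hβ0 y a y).const_mul β).continuousOn_mul (hfc.mono hsub')
  have int3 : IntervalIntegrable (fun t => f t * (y - t) ^ (β - 1)) volume a y :=
    (kernel_intble hβ0 y a y).continuousOn_mul (hfc.mono hsub')
  have hW : ∀ t ∈ Set.Ioo a y,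
      HasDerivAt (fun t => f t * (y - t) ^ β)
        (f' t * (y - t) ^ β - f t * (β * (y - t) ^ (β - 1))) t := by
    intro t ht
    have hpos : (0:ℝ) < y - t := by linarith [ht.2]
    have h1 : HasDerivAt (fun t : ℝ => (y - t) ^ β) (β * (y - t) ^ (β - 1) * (-1)) t :=
      (Real.hasDerivAt_rpow_const (x := y - t) (p := β) (Or.inl hpos.ne')).comp t
        ((hasDerivAt_id t).const_sub y)
    have h2 := (hderiv t (hsub ⟨ht.1.le, ht.2.le⟩)).mul h1
    refine h2.congr_deriv ?_
    ring
  have hWc : ContinuousOn (fun t => f t * (y - t) ^ β) (Set.Icc a y) :=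
    (hfc.mono hsub).mul (kernel_cont hβ0 y).continuousOn
  have hWint : IntervalIntegrable
      (fun t => f' t * (y - t) ^ β - f t * (β * (y - t) ^ (β - 1))) volume a y :=
    int1.sub int2
  have hftc := intervalIntegral.integral_eq_sub_of_hasDerivAt_of_le hay.le hWc hW hWint
  rw [sub_self, Real.zero_rpow hβ0.ne', mul_zero, zero_sub] at hftc
  rw [intervalIntegral.integral_sub int1 int2] at hftc
  have e1 : (∫ t in a..y, f t * (β * (y - t) ^ (β - 1)))
      = β * ∫ t in a..y, f t * (y - t) ^ (β - 1) := by
    rw [← intervalIntegral.integral_const_mul]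
    exact intervalIntegral.integral_congr fun t _ => by ring
  rw [e1] at hftc
  linarith [hftc]

end Aux

/-- for `0 < β < 1`, `0 < α < 1`, `f ∈ C¹([a,b])`, the forward
scale velocity of order `α` of
`g(y) := I^β_a f(y) - f(a)·(y-a)^β/Γ(β+1)` satisfies
`S⁺_ε[g](x;α) = (ε^α/(1-α))·D^{1-β}_a f(x+ε)`, where
`D^{1-β}_a f(y) = (1/Γ(β))·∫_a^y f'(t)(y-t)^{β-1} dt` is the Caputo
derivative of order `1-β`. -/
theorem stmt15 (β α : ℝ) (hβ0 : 0 < β) (hβ1 : β < 1) (hα0 : 0 < α) (hα1 : α < 1)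
    (a b : ℝ) (hab : a < b) (f f' : ℝ → ℝ)
    (hderiv : ∀ t ∈ Set.Icc a b, HasDerivAt f (f' t) t)
    (hcont : ContinuousOn f' (Set.Icc a b))
    (g : ℝ → ℝ)
    (hg : ∀ y : ℝ, g y =
      (1 / Real.Gamma β) * (∫ t in a..y, f t * (y - t) ^ (β - 1)) -
        f a * (y - a) ^ β / Real.Gamma (β + 1)) :
    ∀ x ∈ Set.Ioo a b, ∃ ε₀ > (0:ℝ), ∀ ε ∈ Set.Ioo (0:ℝ) ε₀,
      (1 / (1 - α)) * ε ^ α * deriv (fun e : ℝ => g (x + e)) ε =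
        (ε ^ α / (1 - α)) *
          ((1 / Real.Gamma β) * ∫ t in a..(x + ε), f' t * (x + ε - t) ^ (β - 1)) := by
  intro x hx
  refine ⟨b - x, by linarith [hx.2], ?_⟩
  rintro ε ⟨hε0, hεb⟩
  have hy₀ : x + ε ∈ Set.Ioo a b := ⟨by linarith [hx.1], by linarith⟩
  obtain ⟨M, hM⟩ : ∃ M, ∀ t ∈ Set.Icc a b, |f' t| ≤ M := by
    obtain ⟨M, hM⟩ := isCompact_Icc.exists_bound_of_continuousOn hcont
    exact ⟨M, fun t ht => by simpa [Real.norm_eq_abs] using hM t ht⟩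
  have hΓβ : 0 < Real.Gamma β := Real.Gamma_pos_of_pos hβ0
  have hΓβ1 : Real.Gamma (β + 1) = β * Real.Gamma β := Real.Gamma_add_one hβ0.ne'
  have hΓβ1' : Real.Gamma (β + 1) ≠ 0 := by rw [hΓβ1]; positivity
  have hPhi := hasDerivAt_Phi hβ0 hβ1 hcont hM hy₀
  set I := ∫ t in a..(x + ε), f' t * (x + ε - t) ^ (β - 1) with hI
  have h1 : HasDerivAt (fun y => (1 / Real.Gamma (β + 1)) * ∫ t in a..y, f' t * (y - t) ^ β)
      ((1 / Real.Gamma (β + 1)) * (β * I)) (x + ε) := hPhi.const_mul _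
  have heq : g =ᶠ[nhds (x + ε)]
      fun y => (1 / Real.Gamma (β + 1)) * ∫ t in a..y, f' t * (y - t) ^ β := by
    filter_upwards [Ioo_mem_nhds hy₀.1 hy₀.2] with y hy
    have hid := ibp_identity hβ0 hderiv hcont (y := y) ⟨hy.1, hy.2.le⟩
    rw [hg y]
    have hIy : (∫ t in a..y, f t * (y - t) ^ (β - 1))
        = (f a * (y - a) ^ β + ∫ t in a..y, f' t * (y - t) ^ β) / β := by
      field_simp
      linarith [hid]
    rw [hIy, hΓβ1]
    field_simp
    ring
  have hgd : HasDerivAt g ((1 / Real.Gamma (β + 1)) * (β * I)) (x + ε) :=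
    h1.congr_of_eventuallyEq heq
  have hgd' : HasDerivAt g ((1 / Real.Gamma β) * I) (x + ε) := by
    convert hgd using 1
    rw [hΓβ1]
    field_simp
  have hcomp : HasDerivAt (fun e : ℝ => g (x + e)) ((1 / Real.Gamma β) * I) ε := by
    have h2 : HasDerivAt (fun e : ℝ => x + e) 1 ε := by
      simpa using (hasDerivAt_id ε).const_add x
    have := hgd'.comp ε h2
    rw [mul_one] at this
    exact this
  rw [hcomp.deriv]
  ring
end
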